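/- Let F₂ be the free group on two generators and Γ = ℤ × F₂. There exist a nonempty finite alphabet A and a finite set L of patterns over Γ such that the subshift of finite type X = {x : Γ → A | for all g ∈ Γ, g·x disagrees with every pattern in L} is nonempty and Stab(x) = {1} for every x ∈ X (a strongly aperiodic SFT on ℤ × F₂). -/

import Mathlib

/-- The shift action of a group `Γ` on configurations: `(g • x) h = x (g⁻¹ h)`. -/
def Shift {Γ A : Type*} [Group Γ] (g : Γ) (x : Γ → A) : Γ → A :=
  fun h => x (g⁻¹ * h)

/-- The stabilizer of a configuration under the shift action. -/
def Stab {Γ A : Type*} [Group Γ] (x : Γ → A) : Set Γ :=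
  {g | Shift g x = x}

/-- The SFT on `Γ` determined by a set `L` of patterns over `Γ` (a pattern being a finite
domain `D ⊆ Γ` together with a word on it): the configurations `x : Γ → A` all of whose
shifts `g • x` disagree with every pattern of `L`. -/
def SFT {Γ A : Type*} [Group Γ] (L : Set (Finset Γ × (Γ → A))) : Set (Γ → A) :=
  {x | ∀ g : Γ, ∀ w ∈ L, ∃ k ∈ w.1, Shift g x k ≠ w.2 k}

/-!
A tile records, on the row `ℤ × {t}`, one digit of the mechanical word of a slope `α t ∈ (1/3, 2]`,
a letter pointing from `t` to its parent `par t` in the Cayley tree of `F₂`, and whether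
`α (par t)` is `2 * α t` or `α t / 3`; carries make the relation between the two rows local.
A valid configuration orients the tree towards an end and takes the slopes from the orbit of `1/2`
under this bijection of `(1/3, 2]`, indexed by the Busemann function.

Conversely, the digit sums `S t N` of a row satisfy `S (par t) ≈ 2 S t` or `3 S (par t) ≈ S t` up to
bounded errors, so `3 ^ b S (par^[k] t) ≈ 2 ^ a S t` with `a + b = k`. A period `(m, s)` commutes
with `par` and moves `S` by a bounded amount; the parent orbits of `1` and `s⁻¹` meet, `S` is
unbounded and `2 ^ a 3 ^ b` determines `(a, b)`, so both orbits have the same length and `s = 1`.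
A period `m ≠ 0` along `ℤ` makes the sums over `3 |m|` digits exactly related, which yields positive
integers `P, P' ≤ 6 |m|` with `3 ^ b P' = 2 ^ a P` for arbitrarily large `a + b`: impossible.
-/

open Finset

section LocalRule

variable {Γ A : Type*} [Group Γ]

theorem exists_finite_SFT_eq [Finite A] [Nonempty A] (W : Finset Γ) (P : (Γ → A) → Prop)
    (hP : ∀ y y' : Γ → A, (∀ k ∈ W, y k = y' k) → P y → P y') :
    ∃ L : Set (Finset Γ × (Γ → A)), L.Finite ∧ SFT L = {x | ∀ g, P fun k => x (g * k)} := by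
  classical
  obtain ⟨d⟩ := ‹Nonempty A›
  refine ⟨(fun f => (W, f)) '' {f | (∀ k ∉ W, f k = d) ∧ ¬ P f}, ?_, ?_⟩
  · refine ((Set.finite_range fun (f : W → A) k => if hk : k ∈ W then f ⟨k, hk⟩ else d).subset
      fun f hf => ⟨fun k => f k, funext fun k => ?_⟩).image _
    by_cases hk : k ∈ W
    · simp [hk]
    · simp [hk, hf.1 k hk]
  · ext x
    refine ⟨fun hx g => ?_, fun hx g _ => ?_⟩
    · by_contra hg
      let f : Γ → A := fun k => if k ∈ W then x (g * k) else d
      obtain ⟨k, hk, hne⟩ := hx g⁻¹ (W, f)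
        ⟨f, ⟨fun k hk => if_neg hk, fun hf => hg (hP _ _ (fun k hk => if_pos hk) hf)⟩, rfl⟩
      exact hne (by simp [Shift, f, hk])
    · rintro ⟨f, ⟨-, hf⟩, rfl⟩
      by_contra! h
      exact hf (hP _ _ h (hx g⁻¹))

theorem stab_comp_of_injective {B : Type*} {e : A → B} (he : Function.Injective e) (x : Γ → A) :
    Stab (e ∘ x) = Stab x :=
  Set.ext fun _ => he.comp_left.eq_iff

theorem exists_fin_SFT_of_local [Fintype A] (W : Finset Γ) (P : (Γ → A) → Prop)
    (hP : ∀ y y' : Γ → A, (∀ k ∈ W, y k = y' k) → P y → P y')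
    (x₀ : Γ → A) (hx₀ : ∀ g, P fun k => x₀ (g * k))
    (hstab : ∀ x : Γ → A, (∀ g, P fun k => x (g * k)) → Stab x = {1}) :
    ∃ (m : ℕ) (_ : 0 < m) (L : Set (Finset Γ × (Γ → Fin m))),
      L.Finite ∧ (SFT L).Nonempty ∧ ∀ x ∈ SFT L, Stab x = ({1} : Set Γ) := by
  have : Nonempty A := ⟨x₀ 1⟩
  let e := Fintype.equivFin A
  obtain ⟨L, hL, hSFT⟩ := exists_finite_SFT_eq W (fun y => P (e.symm ∘ y))
    fun y y' h => hP _ _ fun k hk => by simp [h k hk]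
  refine ⟨Fintype.card A, Fintype.card_pos, L, hL, ⟨e ∘ x₀, ?_⟩, fun x hx => ?_⟩
  · rw [hSFT]
    simpa [Function.comp_def] using hx₀
  · rw [hSFT] at hx
    rw [← stab_comp_of_injective e.symm.injective]
    exact hstab _ hx

end LocalRule

section Horofunction

variable {α : Type*}

def gen (ℓ : α × Bool) : FreeGroup α := FreeGroup.mk [ℓ]

def letterInv (ℓ : α × Bool) : α × Bool := (ℓ.1, !ℓ.2)

@[simp] lemma letterInv_letterInv (ℓ : α × Bool) : letterInv (letterInv ℓ) = ℓ := by
  simp [letterInv]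

lemma gen_letterInv (ℓ : α × Bool) : gen (letterInv ℓ) = (gen ℓ)⁻¹ := by
  simp [gen, letterInv, FreeGroup.inv_mk, FreeGroup.invRev]

variable [DecidableEq α]

lemma toWord_mul_gen (t : FreeGroup α) (ℓ : α × Bool) :
    (t * gen ℓ).toWord =
      if t.toWord.getLast? = some (letterInv ℓ) then t.toWord.dropLast else t.toWord ++ [ℓ] := by
  split_ifs with h
  · obtain ⟨w, hw⟩ := List.getLast?_eq_some_iff.mp h
    have ht : t = FreeGroup.mk w * gen (letterInv ℓ) := by
      rw [← FreeGroup.mk_toWord (x := t), hw, gen, FreeGroup.mul_mk]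
    rw [hw, List.dropLast_concat, ht, mul_assoc, gen_letterInv, inv_mul_cancel, mul_one,
      FreeGroup.toWord_mk]
    exact ((hw ▸ FreeGroup.isReduced_toWord).infix (List.prefix_append w _).isInfix).reduce_eq
  · rw [FreeGroup.toWord_mul, gen, FreeGroup.toWord_mk, FreeGroup.reduce_singleton]
    refine FreeGroup.IsReduced.reduce_eq (List.isChain_append.mpr
      ⟨FreeGroup.isReduced_toWord, List.isChain_singleton _, fun z hz y hy => ?_⟩)
    obtain rfl : ℓ = y := by simpa using hy
    intro h1
    by_contra h2
    exact h (by rw [hz, letterInv, ← h1, ← Bool.eq_not.mpr h2])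

variable (a : α)

-- `towardEnd a t` is the first letter of the geodesic ray from `t` to the end `a a a ⋯` of the
-- Cayley tree, and `horoLevel a` is the Busemann function of that end.
def towardEnd (t : FreeGroup α) : α × Bool :=
  if ∀ p ∈ t.toWord, p = (a, true) then (a, true)
  else letterInv (t.toWord.getLast?.getD (a, true))

def horoLevel (t : FreeGroup α) : ℤ :=
  2 * (t.toWord.takeWhile (· = (a, true))).length - t.toWord.length

lemma towardEnd_of_toWord_eq {t : FreeGroup α} {w : List (α × Bool)} {ℓ : α × Bool}
    (ht : t.toWord = w ++ [ℓ]) (hA : ¬ ∀ p ∈ t.toWord, p = (a, true)) :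
    towardEnd a t = letterInv ℓ := by
  rw [towardEnd, if_neg hA, ht, List.getLast?_concat]
  rfl

lemma towardEnd_flow (t : FreeGroup α) (ℓ : α × Bool) :
    towardEnd a t = ℓ ∨ towardEnd a (t * gen ℓ) = letterInv ℓ := by
  by_cases hA : ∀ p ∈ t.toWord, p = (a, true)
  · by_cases hℓ : ℓ = (a, true)
    · exact .inl (by rw [towardEnd, if_pos hA, hℓ])
    refine .inr ?_
    have hw := toWord_mul_gen t ℓ
    split_ifs at hw with hlast
    · have hℓ' : letterInv ℓ = (a, true) := hA _ (List.mem_of_getLast? hlast)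
      have hA' : ∀ p ∈ (t * gen ℓ).toWord, p = (a, true) := fun p hp =>
        hA p (List.dropLast_subset _ (hw ▸ hp))
      rw [towardEnd, if_pos hA', hℓ']
    · refine towardEnd_of_toWord_eq a hw fun h => hℓ (h ℓ (by simp [hw]))
  · by_cases hℓ : towardEnd a t = ℓ
    · exact .inl hℓ
    refine .inr ?_
    obtain ⟨w, z, hz⟩ : ∃ w z, t.toWord = w ++ [z] :=
      ⟨_, _, (List.dropLast_append_getLast fun h => hA (by simp [h])).symm⟩
    have hw := toWord_mul_gen t ℓ
    rw [if_neg fun h => hℓ ?_] at hw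
    · exact towardEnd_of_toWord_eq a hw fun h => hA fun p hp => h p (by simp [hw, hp])
    · rw [towardEnd_of_toWord_eq a hz hA, ← letterInv_letterInv ℓ]
      rw [hz, List.getLast?_concat] at h
      rw [Option.some_injective _ h]

lemma horoLevel_mul_towardEnd (t : FreeGroup α) :
    horoLevel a (t * gen (towardEnd a t)) = horoLevel a t + 1 := by
  by_cases hA : ∀ p ∈ t.toWord, p = (a, true)
  · have hw : (t * gen (a, true)).toWord = t.toWord ++ [(a, true)] := by
      rw [toWord_mul_gen, if_neg fun h => by simpa [letterInv] using hA _ (List.mem_of_getLast? h)]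
    have hA' : ∀ p ∈ t.toWord ++ [(a, true)], p = (a, true) := fun p hp =>
      (List.mem_append.mp hp).elim (hA p) List.mem_singleton.mp
    rw [towardEnd, if_pos hA, horoLevel, horoLevel, hw,
      List.takeWhile_eq_self_iff.mpr fun p hp => decide_eq_true (hA' p hp),
      List.takeWhile_eq_self_iff.mpr fun p hp => decide_eq_true (hA p hp)]
    simp only [List.length_append, List.length_singleton]
    push_cast
    ring
  · obtain ⟨w, z, hz⟩ : ∃ w z, t.toWord = w ++ [z] :=
      ⟨_, _, (List.dropLast_append_getLast fun h => hA (by simp [h])).symm⟩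
    have hw : (t * gen (towardEnd a t)).toWord = w := by
      rw [toWord_mul_gen, towardEnd_of_toWord_eq a hz hA, letterInv_letterInv, hz,
        List.getLast?_concat, if_pos rfl, List.dropLast_concat]
    have htake : (w ++ [z]).takeWhile (· = (a, true)) = w.takeWhile (· = (a, true)) := by
      rw [List.takeWhile_append]
      split_ifs with h
      · have hw' := (List.takeWhile_prefix _).eq_of_length h
        have hz' : z ≠ (a, true) := fun hz' => hA fun p hp => by
          rw [hz, List.mem_append, List.mem_singleton] at hp
          rcases hp with hp | rfl
          · simpa using List.takeWhile_eq_self_iff.mp hw' p hp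
          · exact hz'
        simp [hw', hz']
      · rfl
    rw [horoLevel, horoLevel, hw, hz, htake, List.length_append, List.length_singleton]
    push_cast
    ring

end Horofunction

section OrbitsMeet

variable {β : Type*} (f : β → β)

def OrbitsMeet (u v : β) : Prop := ∃ k l : ℕ, f^[k] u = f^[l] v

variable {f}

lemma OrbitsMeet.trans {u v w : β} (h₁ : OrbitsMeet f u v) (h₂ : OrbitsMeet f v w) :
    OrbitsMeet f u w := by
  obtain ⟨k, l, h₁⟩ := h₁
  obtain ⟨k', l', h₂⟩ := h₂
  refine ⟨k' + k, l + l', ?_⟩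
  rw [Function.iterate_add_apply, h₁, ← Function.iterate_add_apply, Nat.add_comm,
    Function.iterate_add_apply, h₂, ← Function.iterate_add_apply]

lemma orbitsMeet_of_apply {u v : β} (h : f u = v ∨ f v = u) : OrbitsMeet f u v :=
  h.elim (fun h => ⟨1, 0, h⟩) fun h => ⟨0, 1, h.symm⟩

theorem orbitsMeet_freeGroup {α : Type*} {f : FreeGroup α → FreeGroup α}
    (hf : ∀ t ℓ, f t = t * gen ℓ ∨ f (t * gen ℓ) = t) (u v : FreeGroup α) : OrbitsMeet f u v := by
  suffices ∀ z u, OrbitsMeet f u (u * z) by simpa using this (u⁻¹ * v) u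
  have hgen : ∀ ℓ u, OrbitsMeet f u (u * gen ℓ) := fun ℓ u => orbitsMeet_of_apply (hf u ℓ)
  intro z
  induction z using FreeGroup.induction_on with
  | C1 => exact fun u => ⟨0, 0, (mul_one u).symm⟩
  | of x => exact hgen (x, true)
  | inv_of x _ =>
    intro u
    have := hgen (letterInv (x, true)) u
    rwa [gen_letterInv] at this
  | mul x y hx hy => exact fun u => (hx u).trans (by simpa [mul_assoc] using hy (u * x))

end OrbitsMeet

lemma eq_of_two_pow_mul_three_pow_eq {a b a' b' : ℕ} (h : 2 ^ a * 3 ^ b = 2 ^ a' * 3 ^ b') :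
    a = a' ∧ b = b' := by
  have hf := congrArg Nat.factorization h
  simp only [Nat.factorization_mul (pow_ne_zero _ two_ne_zero) (pow_ne_zero _ three_ne_zero),
    Nat.prime_two.factorization_pow, Nat.prime_three.factorization_pow] at hf
  constructor
  · simpa using DFunLike.congr_fun hf 2
  · simpa using DFunLike.congr_fun hf 3

section DoubleOrTriple

variable {T : Type*} (par : T → T)

theorem exists_three_pow_smul_iterate_eq {M : Type*} [AddCommMonoid M] {F : T → M}
    (hF : ∀ t, F (par t) = 2 • F t ∨ 3 • F (par t) = F t) (t : T) (k : ℕ) :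
    ∃ a b, a + b = k ∧ 3 ^ b • F (par^[k] t) = 2 ^ a • F t := by
  induction k with
  | zero => exact ⟨0, 0, rfl, by simp⟩
  | succ k ih =>
    obtain ⟨a, b, rfl, h⟩ := ih
    rw [Function.iterate_succ_apply']
    rcases hF (par^[a + b] t) with hd | ht
    · refine ⟨a + 1, b, by omega, ?_⟩
      rw [hd, smul_comm, h, ← mul_smul, pow_succ']
    · refine ⟨a, b + 1, by omega, ?_⟩
      rw [pow_succ, mul_smul, ht, h]

theorem iterate_injective_of_double_or_triple {M : Type*} [AddCommMonoid M] {F : T → M}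
    (hF : ∀ t, F (par t) = 2 • F t ∨ 3 • F (par t) = F t) {t : T}
    (ht : ∀ m n : ℕ, m • F t = n • F t → m = n) {k l : ℕ}
    (h : F (par^[k] t) = F (par^[l] t)) : k = l := by
  obtain ⟨a, b, rfl, hab⟩ := exists_three_pow_smul_iterate_eq par hF t k
  obtain ⟨a', b', rfl, hab'⟩ := exists_three_pow_smul_iterate_eq par hF t l
  have := ht (2 ^ a * 3 ^ b') (2 ^ a' * 3 ^ b) (by
    rw [mul_comm, mul_smul, ← hab, ← mul_smul, mul_comm, mul_smul, h, hab', ← mul_smul, mul_comm])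
  obtain ⟨rfl, rfl⟩ := eq_of_two_pow_mul_three_pow_eq this
  rfl

theorem exists_lt_iterate_of_double_or_triple {P : T → ℤ}
    (hP : ∀ t, P (par t) = 2 * P t ∨ 3 * P (par t) = P t) (hpos : ∀ t, 0 < P t) (t : T) (B : ℤ) :
    ∃ k, B < P (par^[k] t) := by
  by_contra! hB
  -- `3 ^ b ∣ P t` and `2 ^ a ∣ P (par^[k] t)`, so `2 ^ k ≤ 2 ^ a * 3 ^ b ≤ B ^ 2`
  obtain ⟨a, b, hk, h⟩ := exists_three_pow_smul_iterate_eq par (M := ℤ) (F := P)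
    (by simpa only [smul_eq_mul, nsmul_eq_mul, Nat.cast_ofNat] using hP) t (B ^ 2).toNat
  simp only [nsmul_eq_mul, Nat.cast_pow, Nat.cast_ofNat] at h
  have hcop : IsCoprime (2 : ℤ) 3 := by rw [Int.isCoprime_iff_gcd_eq_one]; rfl
  have h3 : (3 : ℤ) ^ b ≤ B := (Int.le_of_dvd (hpos t)
    ((hcop.symm.pow).dvd_of_dvd_mul_left (Dvd.intro _ h))).trans (hB 0)
  have h2 : (2 : ℤ) ^ a ≤ B := (Int.le_of_dvd (hpos _)
    ((hcop.pow).dvd_of_dvd_mul_left (Dvd.intro _ h.symm))).trans (hB _)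
  have hlt : ((B ^ 2).toNat : ℤ) < 2 ^ (B ^ 2).toNat := by exact_mod_cast Nat.lt_two_pow_self
  have : (2 : ℤ) ^ (a + b) ≤ 2 ^ a * 3 ^ b := by
    rw [pow_add]
    gcongr
    norm_num
  rw [hk] at this
  nlinarith [Int.self_le_toNat (B ^ 2), pow_pos (two_pos (α := ℤ)) a]

end DoubleOrTriple

def boundedSeqs : AddSubgroup (ℕ → ℤ) where
  carrier := {f | ∃ C, ∀ N, |f N| ≤ C}
  zero_mem' := ⟨0, by simp⟩
  add_mem' := by
    rintro f g ⟨C, hC⟩ ⟨D, hD⟩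
    exact ⟨C + D, fun N => (abs_add_le _ _).trans (add_le_add (hC N) (hD N))⟩
  neg_mem' := by
    rintro f ⟨C, hC⟩
    exact ⟨C, fun N => by simpa using hC N⟩

abbrev SeqModBounded : Type := (ℕ → ℤ) ⧸ boundedSeqs

lemma mem_boundedSeqs_of_zsmul {n : ℤ} (hn : n ≠ 0) {f : ℕ → ℤ} (h : n • f ∈ boundedSeqs) :
    f ∈ boundedSeqs := by
  obtain ⟨C, hC⟩ := h
  refine ⟨C, fun N => ?_⟩
  calc |f N| ≤ |n| * |f N| := le_mul_of_one_le_left (abs_nonneg _) (Int.one_le_abs hn)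
    _ = |(n • f) N| := by simp [abs_mul]
    _ ≤ C := hC N

lemma nsmul_mk_injective {f : ℕ → ℤ} (hf : f ∉ boundedSeqs) {m n : ℕ}
    (h : m • (f : SeqModBounded) = n • (f : SeqModBounded)) : m = n := by
  by_contra hmn
  refine hf (mem_boundedSeqs_of_zsmul (n := (m : ℤ) - n) (by omega) ?_)
  rw [← QuotientAddGroup.eq_zero_iff, sub_smul, QuotientAddGroup.mk_sub, natCast_zsmul,
    natCast_zsmul, QuotientAddGroup.mk_nsmul, QuotientAddGroup.mk_nsmul, h, sub_self]

lemma mk_sum_shift {g : ℤ → ℤ} {C : ℤ} (hg : ∀ n, |g n| ≤ C) (m : ℤ) :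
    ((fun N => ∑ i ∈ range N, g (i + m) : ℕ → ℤ) : SeqModBounded) =
      ((fun N => ∑ i ∈ range N, g i : ℕ → ℤ) : SeqModBounded) := by
  have step : ∀ m : ℤ, ((fun N => ∑ i ∈ range N, g (i + (m + 1)) : ℕ → ℤ) : SeqModBounded) =
      ((fun N => ∑ i ∈ range N, g (i + m) : ℕ → ℤ) : SeqModBounded) := by
    intro m
    refine QuotientAddGroup.eq_iff_sub_mem.mpr ⟨2 * C, fun N => ?_⟩
    have htel : ∑ i ∈ range N, (g (i + (m + 1)) - g (i + m)) = g (N + m) - g m := by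
      simpa [add_right_comm _ (1 : ℤ), add_assoc] using sum_range_sub (fun i : ℕ => g (i + m)) N
    simp only [Pi.sub_apply, ← sum_sub_distrib, htel]
    linarith [abs_sub (g (N + m)) (g m), hg (N + m), hg m]
  induction m using Int.induction_on with
  | zero => simp
  | succ k ih => rw [step, ih]
  | pred k ih => rw [← ih, ← step, sub_add_cancel]

section MechanicalWords

variable {K : Type*} [Field K] [LinearOrder K] [FloorRing K]

def mechanicalDigit (q : K) (n : ℤ) : ℤ := ⌊n * q⌋ - ⌊(n - 1) * q⌋

def mechanicalCarry (m : ℕ) (q : K) (n : ℤ) : ℤ := ⌊n * (m * q)⌋ - m * ⌊n * q⌋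

lemma mechanicalDigit_mul (m : ℕ) (q : K) (n : ℤ) :
    mechanicalDigit (m * q) n =
      m * mechanicalDigit q n + mechanicalCarry m q n - mechanicalCarry m q (n - 1) := by
  simp only [mechanicalDigit, mechanicalCarry]
  push_cast
  ring

variable [IsStrictOrderedRing K]

lemma mechanicalDigit_nonneg {q : K} (hq : 0 ≤ q) (n : ℤ) : 0 ≤ mechanicalDigit q n :=
  sub_nonneg.mpr (Int.floor_mono (by nlinarith))

lemma mechanicalDigit_le_two {q : K} (hq : q ≤ 2) (n : ℤ) : mechanicalDigit q n ≤ 2 := by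
  have : ⌊n * q⌋ ≤ ⌊(n - 1) * q + (2 : ℤ)⌋ := Int.floor_mono (by push_cast; linarith)
  rw [Int.floor_add_intCast] at this
  rw [mechanicalDigit]
  omega

lemma mechanicalDigit_add_add_pos {q : K} (hq : 1 ≤ 3 * q) (n : ℤ) :
    0 < mechanicalDigit q n + mechanicalDigit q (n + 1) + mechanicalDigit q (n + 2) := by
  have : ⌊(n - 1) * q + (1 : ℤ)⌋ ≤ ⌊(n + 2) * q⌋ := Int.floor_mono (by push_cast; linarith)
  rw [Int.floor_add_intCast] at this
  simp only [mechanicalDigit]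
  push_cast
  ring_nf at this ⊢
  omega

lemma mechanicalCarry_nonneg (m : ℕ) (q : K) (n : ℤ) : 0 ≤ mechanicalCarry m q n := by
  have : (m : ℤ) * ⌊n * q⌋ ≤ ⌊n * (m * q)⌋ := Int.le_floor.mpr (by
    push_cast
    nlinarith [Int.floor_le ((n : K) * q), (Nat.cast_nonneg m : (0 : K) ≤ m)])
  rw [mechanicalCarry]
  omega

lemma mechanicalCarry_lt {m : ℕ} (hm : 0 < m) (q : K) (n : ℤ) : mechanicalCarry m q n < m := by
  have : ⌊n * (m * q)⌋ < m * ⌊n * q⌋ + m := Int.floor_lt.mpr (by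
    push_cast
    nlinarith [Int.lt_floor_add_one ((n : K) * q), (Nat.cast_pos.mpr hm : (0 : K) < m)])
  rw [mechanicalCarry]
  omega

end MechanicalWords

def slopeStep (q : ℚ) : ℚ := if q ≤ 1 then 2 * q else q / 3

def slopeStepInv (q : ℚ) : ℚ := if q ≤ 2 / 3 then 3 * q else q / 2

def slopePerm : Equiv.Perm (Set.Ioc (1 / 3 : ℚ) 2) where
  toFun q := ⟨slopeStep q, by
    obtain ⟨q, h₁, h₂⟩ := q
    unfold slopeStep
    split_ifs <;> constructor <;> linarith⟩
  invFun q := ⟨slopeStepInv q, by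
    obtain ⟨q, h₁, h₂⟩ := q
    unfold slopeStepInv
    split_ifs <;> constructor <;> linarith⟩
  left_inv := by
    rintro ⟨q, h₁, h₂⟩
    refine Subtype.ext ?_
    dsimp only
    unfold slopeStep slopeStepInv
    split_ifs <;> first | ring1 | linarith
  right_inv := by
    rintro ⟨q, h₁, h₂⟩
    refine Subtype.ext ?_
    dsimp only
    unfold slopeStep slopeStepInv
    split_ifs <;> first | ring1 | linarith

def modelSlope (t : FreeGroup (Fin 2)) : ℚ :=
  ((slopePerm ^ horoLevel 0 t) ⟨1 / 2, by norm_num⟩ : Set.Ioc (1 / 3 : ℚ) 2)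

lemma modelSlope_mem (t : FreeGroup (Fin 2)) : modelSlope t ∈ Set.Ioc (1 / 3 : ℚ) 2 :=
  Subtype.prop _

lemma modelSlope_mul_towardEnd (t : FreeGroup (Fin 2)) :
    modelSlope (t * gen (towardEnd 0 t)) = slopeStep (modelSlope t) := by
  rw [modelSlope, horoLevel_mul_towardEnd, add_comm, zpow_one_add, Equiv.Perm.mul_apply]
  rfl

-- `third` says that the parent row has slope `α / 3` rather than `2 * α`, and `carry` is the carry
-- of `mechanicalDigit_mul` linking the digits of the row to those of its parent row.
structure Tile where
  dir : Fin 2 × Bool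
  third : Bool
  digit : Fin 3
  carry : Fin 3

instance : Fintype Tile :=
  Fintype.ofEquiv ((Fin 2 × Bool) × Bool × Fin 3 × Fin 3)
    { toFun := fun p => ⟨p.1, p.2.1, p.2.2.1, p.2.2.2⟩
      invFun := fun a => (a.dir, a.third, a.digit, a.carry)
      left_inv := fun _ => rfl
      right_inv := fun _ => rfl }

def Tile.v (a : Tile) : ℤ := a.digit

def Tile.c (a : Tile) : ℤ := a.carry

lemma Tile.v_nonneg (a : Tile) : 0 ≤ a.v := Int.natCast_nonneg _

lemma Tile.v_le_two (a : Tile) : a.v ≤ 2 := by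
  have := a.digit.isLt
  rw [Tile.v]
  omega

lemma Tile.abs_c_sub_c_le (a b : Tile) : |a.c - b.c| ≤ 2 := by
  have := a.carry.isLt
  have := b.carry.isLt
  rw [Tile.c, Tile.c, abs_le]
  omega

local notation "Γ" => Multiplicative ℤ × FreeGroup (Fin 2)

def site (n : ℤ) (t : FreeGroup (Fin 2)) : Γ := (Multiplicative.ofAdd n, t)

@[simp] lemma site_mul (n m : ℤ) (t u : FreeGroup (Fin 2)) :
    site n t * site m u = site (n + m) (t * u) := rfl

def window : Finset Γ :=
  {site 0 1, site 1 1, site 2 1} ∪ univ.image (site 0 ∘ gen) ∪ univ.image (site 1 ∘ gen)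

structure TileRules (y : Γ → Tile) : Prop where
  dir_eq : (y (site 1 1)).dir = (y (site 0 1)).dir
  third_eq : (y (site 1 1)).third = (y (site 0 1)).third
  flow (ℓ : Fin 2 × Bool) : (y (site 0 1)).dir = ℓ ∨ (y (site 0 (gen ℓ))).dir = letterInv ℓ
  digit_sum_pos : 0 < (y (site 0 1)).v + (y (site 1 1)).v + (y (site 2 1)).v
  double : (y (site 0 1)).third = false →
    (y (site 1 (gen (y (site 0 1)).dir))).v =
      2 * (y (site 1 1)).v + (y (site 1 1)).c - (y (site 0 1)).c
  triple : (y (site 0 1)).third = true →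
    (y (site 1 1)).v =
      3 * (y (site 1 (gen (y (site 0 1)).dir))).v + (y (site 1 1)).c - (y (site 0 1)).c

lemma TileRules.of_eqOn_window {y y' : Γ → Tile} (h : ∀ k ∈ window, y k = y' k)
    (hy : TileRules y) : TileRules y' := by
  have h0 : y (site 0 1) = y' (site 0 1) := h _ (by simp [window])
  have h1 : y (site 1 1) = y' (site 1 1) := h _ (by simp [window])
  have h2 : y (site 2 1) = y' (site 2 1) := h _ (by simp [window])
  have hg0 : ∀ ℓ, y (site 0 (gen ℓ)) = y' (site 0 (gen ℓ)) := fun ℓ => h _ (by simp [window])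
  have hg1 : ∀ ℓ, y (site 1 (gen ℓ)) = y' (site 1 (gen ℓ)) := fun ℓ => h _ (by simp [window])
  obtain ⟨hdir, hthird, hflow, hpos, hdouble, htriple⟩ := hy
  simp only [h0, h1, h2, hg0, hg1] at hdir hthird hflow hpos hdouble htriple
  exact ⟨hdir, hthird, hflow, hpos, hdouble, htriple⟩

def modelCarry (q : ℚ) (n : ℤ) : ℤ :=
  if q ≤ 1 then mechanicalCarry 2 q n else mechanicalCarry 3 (q / 3) n

open scoped Fin.IntCast in
def modelTile (n : ℤ) (t : FreeGroup (Fin 2)) : Tile where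
  dir := towardEnd 0 t
  third := decide (1 < modelSlope t)
  digit := (mechanicalDigit (modelSlope t) n : Fin 3)
  carry := (modelCarry (modelSlope t) n : Fin 3)

def model (g : Γ) : Tile := modelTile (Multiplicative.toAdd g.1) g.2

open scoped Fin.IntCast in
lemma val_intCast_fin_three {z : ℤ} (h₀ : 0 ≤ z) (h₃ : z < 3) : (((z : Fin 3) : ℕ) : ℤ) = z := by
  rw [Fin.val_intCast, Int.toNat_of_nonneg (Int.emod_nonneg _ (by norm_num)),
    Int.emod_eq_of_lt h₀ (by exact_mod_cast h₃)]

@[simp] lemma model_site (n : ℤ) (t : FreeGroup (Fin 2)) : model (site n t) = modelTile n t := rfl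

lemma modelTile_v (n : ℤ) (t : FreeGroup (Fin 2)) :
    (modelTile n t).v = mechanicalDigit (modelSlope t) n := by
  obtain ⟨h₁, h₂⟩ := modelSlope_mem t
  exact val_intCast_fin_three (mechanicalDigit_nonneg (by linarith) n)
    (by linarith [mechanicalDigit_le_two h₂ n])

lemma modelTile_c (n : ℤ) (t : FreeGroup (Fin 2)) :
    (modelTile n t).c = modelCarry (modelSlope t) n := by
  refine val_intCast_fin_three ?_ ?_ <;> unfold modelCarry <;> split_ifs
  · exact mechanicalCarry_nonneg _ _ _
  · exact mechanicalCarry_nonneg _ _ _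
  · exact (mechanicalCarry_lt two_pos _ _).trans (by norm_num)
  · exact mechanicalCarry_lt three_pos _ _

theorem tileRules_model (g : Γ) : TileRules fun k => model (g * k) := by
  obtain ⟨n, t, rfl⟩ : ∃ n t, g = site n t := ⟨_, _, rfl⟩
  obtain ⟨h₁, h₂⟩ := modelSlope_mem t
  have hdir : ∀ n, (modelTile n t).dir = towardEnd 0 t := fun _ => rfl
  have hthird : ∀ n, (modelTile n t).third = decide (1 < modelSlope t) := fun _ => rfl
  refine ⟨rfl, rfl, ?_, ?_, ?_, ?_⟩ <;>
    simp only [site_mul, model_site, add_zero, mul_one, modelTile_v, modelTile_c, hdir, hthird,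
      modelSlope_mul_towardEnd, slopeStep, modelCarry, decide_eq_false_iff_not, decide_eq_true_eq,
      not_lt]
  · exact towardEnd_flow 0 t
  · exact mechanicalDigit_add_add_pos (by linarith) n
  · intro hq
    simp only [if_pos hq]
    simpa using mechanicalDigit_mul 2 (modelSlope t) (n + 1)
  · intro hq
    simp only [if_neg hq.not_ge]
    simpa [mul_div_cancel₀] using mechanicalDigit_mul 3 (modelSlope t / 3) (n + 1)

def IsTiling (x : Γ → Tile) : Prop := ∀ g, TileRules fun k => x (g * k)

def parentOf (x : Γ → Tile) (t : FreeGroup (Fin 2)) : FreeGroup (Fin 2) :=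
  t * gen (x (site 0 t)).dir

def digitSum (x : Γ → Tile) (t : FreeGroup (Fin 2)) (N : ℕ) : ℤ :=
  ∑ i ∈ range N, (x (site (i + 1) t)).v

lemma digitSum_le (x : Γ → Tile) (t : FreeGroup (Fin 2)) (N : ℕ) : digitSum x t N ≤ 2 * N := by
  have := sum_le_card_nsmul (range N) _ 2 fun i _ => (x (site (i + 1) t)).v_le_two
  rw [card_range, nsmul_eq_mul, mul_comm] at this
  exact this

namespace IsTiling

variable {x : Γ → Tile} (hx : IsTiling x)

include hx

lemma rules (n : ℤ) (t : FreeGroup (Fin 2)) : TileRules fun k => x (site n t * k) := hx _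

lemma dir_site (n : ℤ) (t : FreeGroup (Fin 2)) : (x (site n t)).dir = (x (site 0 t)).dir := by
  have : Function.Periodic (fun n => (x (site n t)).dir) 1 := fun n => by
    simpa using (hx.rules n t).dir_eq
  simpa using this.int_mul_eq n

lemma third_site (n : ℤ) (t : FreeGroup (Fin 2)) : (x (site n t)).third = (x (site 0 t)).third := by
  have : Function.Periodic (fun n => (x (site n t)).third) 1 := fun n => by
    simpa using (hx.rules n t).third_eq
  simpa using this.int_mul_eq n

lemma parentOf_flow (t : FreeGroup (Fin 2)) (ℓ : Fin 2 × Bool) :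
    parentOf x t = t * gen ℓ ∨ parentOf x (t * gen ℓ) = t := by
  rcases (hx.rules 0 t).flow ℓ with h | h <;> simp only [site_mul, add_zero, mul_one] at h
  · exact .inl (by rw [parentOf, h])
  · exact .inr (by rw [parentOf, h, gen_letterInv, mul_inv_cancel_right])

lemma digitSum_parentOf_of_third_false {t : FreeGroup (Fin 2)} (ht : (x (site 0 t)).third = false)
    (N : ℕ) :
    digitSum x (parentOf x t) N - 2 * digitSum x t N = (x (site N t)).c - (x (site 0 t)).c := by
  rw [digitSum, digitSum, mul_sum, ← sum_sub_distrib]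
  refine (sum_congr rfl fun i _ => ?_).trans (sum_range_sub (fun i : ℕ => (x (site i t)).c) N)
  have := (hx.rules i t).double (by simpa [hx.third_site] using ht)
  simp only [site_mul, add_zero, mul_one, hx.dir_site] at this
  push_cast
  rw [parentOf, this]
  ring

lemma digitSum_sub_parentOf_of_third_true {t : FreeGroup (Fin 2)} (ht : (x (site 0 t)).third = true)
    (N : ℕ) :
    digitSum x t N - 3 * digitSum x (parentOf x t) N = (x (site N t)).c - (x (site 0 t)).c := by
  rw [digitSum, digitSum, mul_sum, ← sum_sub_distrib]
  refine (sum_congr rfl fun i _ => ?_).trans (sum_range_sub (fun i : ℕ => (x (site i t)).c) N)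
  have := (hx.rules i t).triple (by simpa [hx.third_site] using ht)
  simp only [site_mul, add_zero, mul_one, hx.dir_site] at this
  push_cast
  rw [parentOf, this]
  ring

lemma le_digitSum (t : FreeGroup (Fin 2)) (M : ℕ) : (M : ℤ) ≤ digitSum x t (3 * M) := by
  induction M with
  | zero => simp [digitSum]
  | succ M ih =>
    have := (hx.rules (3 * M + 1) t).digit_sum_pos
    simp only [site_mul, add_zero, mul_one] at this
    rw [show 3 * (M + 1) = 3 * M + 1 + 1 + 1 by ring, digitSum, sum_range_succ, sum_range_succ,
      sum_range_succ, ← digitSum]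
    push_cast at this ⊢
    ring_nf at this ih ⊢
    linarith

lemma digitSum_not_mem_boundedSeqs (t : FreeGroup (Fin 2)) : digitSum x t ∉ boundedSeqs := by
  rintro ⟨C, hC⟩
  have := hx.le_digitSum t (C.toNat + 1)
  have := (le_abs_self _).trans (hC (3 * (C.toNat + 1)))
  omega

lemma mk_digitSum_parentOf (t : FreeGroup (Fin 2)) :
    (digitSum x (parentOf x t) : SeqModBounded) = 2 • (digitSum x t : SeqModBounded) ∨
      3 • (digitSum x (parentOf x t) : SeqModBounded) = (digitSum x t : SeqModBounded) := by
  have hc : ∀ N, |(x (site N t)).c - (x (site 0 t)).c| ≤ 2 := fun N => Tile.abs_c_sub_c_le _ _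
  simp only [← QuotientAddGroup.mk_nsmul, QuotientAddGroup.eq_iff_sub_mem]
  cases hb : (x (site 0 t)).third
  · exact .inl ⟨2, fun N => by simpa [hx.digitSum_parentOf_of_third_false hb] using hc N⟩
  · refine .inr ⟨2, fun N => ?_⟩
    rw [← abs_neg]
    simpa [hx.digitSum_sub_parentOf_of_third_true hb] using hc N

theorem eq_one_of_shift_eq {m : ℤ} {s : FreeGroup (Fin 2)}
    (hs : ∀ n t, x (site n (s⁻¹ * t)) = x (site (n + m) t)) : s = 1 := by
  let F : FreeGroup (Fin 2) → SeqModBounded := fun t => (digitSum x t : ℕ → ℤ)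
  have hshift : ∀ t, F (s⁻¹ * t) = F t := fun t => by
    have hv : ∀ n, |(x (site n t)).v| ≤ 2 := fun n =>
      (abs_of_nonneg (x (site n t)).v_nonneg).trans_le (x (site n t)).v_le_two
    have e : digitSum x (s⁻¹ * t) = fun N => ∑ i ∈ range N, (x (site (i + (1 + m)) t)).v :=
      funext fun N => sum_congr rfl fun i _ => by rw [hs, add_assoc]
    simp only [F, e, mk_sum_shift hv]
    exact (mk_sum_shift hv 1).symm
  have hsemi : Function.Semiconj (s⁻¹ * ·) (parentOf x) (parentOf x) := fun t => by
    simp only [parentOf, hs, zero_add, hx.dir_site, mul_assoc]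
  obtain ⟨k, l, hkl⟩ := orbitsMeet_freeGroup hx.parentOf_flow 1 s⁻¹
  have hl : (parentOf x)^[l] s⁻¹ = s⁻¹ * (parentOf x)^[l] 1 := by
    simpa using (hsemi.iterate_right l 1).symm
  obtain rfl : k = l := iterate_injective_of_double_or_triple (parentOf x) (F := F)
    hx.mk_digitSum_parentOf (fun _ _ => nsmul_mk_injective (hx.digitSum_not_mem_boundedSeqs 1))
    (by rw [hkl, hl, hshift])
  rw [hl] at hkl
  simpa using hkl

theorem eq_zero_of_periodic {m : ℤ} (hm : ∀ n t, x (site (n + m) t) = x (site n t)) : m = 0 := by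
  by_contra hm0
  set D := 3 * m.natAbs
  have hper : ∀ t, x (site D t) = x (site 0 t) := fun t => by
    have := (show Function.Periodic (fun n => x (site n t)) m from fun n => hm n t).int_mul_eq
      (3 * m.sign)
    rwa [Int.cast_id, mul_assoc, Int.sign_mul_self] at this
  have hP : ∀ t, digitSum x (parentOf x t) D = 2 * digitSum x t D ∨
      3 * digitSum x (parentOf x t) D = digitSum x t D := fun t => by
    cases hb : (x (site 0 t)).third
    · have := hx.digitSum_parentOf_of_third_false hb D
      rw [hper] at this
      exact .inl (by linarith)
    · have := hx.digitSum_sub_parentOf_of_third_true hb D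
      rw [hper] at this
      exact .inr (by linarith)
  have hpos : ∀ t, 0 < digitSum x t D := fun t =>
    (Int.natCast_pos.mpr (Int.natAbs_pos.mpr hm0)).trans_le (hx.le_digitSum t _)
  obtain ⟨k, hk⟩ := exists_lt_iterate_of_double_or_triple _ hP hpos 1 (2 * D)
  exact hk.not_ge (digitSum_le _ _ _)

theorem stab_eq : Stab x = {1} := by
  ext ⟨a, s⟩
  simp only [Stab, Set.mem_ofPred_eq, Set.mem_singleton_iff]
  refine ⟨fun hg => ?_, fun hg => ?_⟩
  · have hs : ∀ n t, x (site n (s⁻¹ * t)) = x (site (n + a.toAdd) t) := fun n t => by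
      have hinv : ((a, s)⁻¹ : Γ) * site (n + a.toAdd) t = site n (s⁻¹ * t) :=
        Prod.ext (Multiplicative.toAdd.injective (by simp [site])) rfl
      rw [← congrFun hg (site (n + a.toAdd) t), Shift, hinv]
    obtain rfl := hx.eq_one_of_shift_eq hs
    have := hx.eq_zero_of_periodic fun n t => by simpa using (hs n t).symm
    exact Prod.ext (toAdd_eq_zero.mp this) rfl
  · rw [hg]
    funext k
    simp [Shift]

end IsTiling

/-- There is a strongly aperiodic SFT on `ℤ × F₂` (`F₂` the free group on two
generators): a nonempty finite alphabet `Fin m` and a finite set `L` of patterns over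
`Γ = ℤ × F₂` whose SFT `X` is nonempty with `Stab(x) = {1}` for every `x ∈ X`. -/
theorem stmt_17 :
    ∃ (m : ℕ) (_ : 0 < m)
      (L : Set (Finset (Multiplicative ℤ × FreeGroup (Fin 2)) ×
        ((Multiplicative ℤ × FreeGroup (Fin 2)) → Fin m))),
      L.Finite ∧ (SFT L).Nonempty ∧
        ∀ x ∈ SFT L, Stab x = ({1} : Set (Multiplicative ℤ × FreeGroup (Fin 2))) :=
  exists_fin_SFT_of_local window TileRules (fun _ _ => TileRules.of_eqOn_window) model
    tileRules_model fun _ hx => IsTiling.stab_eq hx
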